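/- arXiv:1011.6429 — 2 statements merged into one kernel-verified Lean document; each statement's English description precedes it below -/
import Mathlib

section
/- Let C₁ and C₂ be sets of PA*01 expressions. Then C₁‖C₂ is a strongly connected component if and only if both C₁ and C₂ are strongly connected components. Moreover, C₁‖C₂ is non-trivial if and only if at least one of C₁ and C₂ is non-trivial. -/
/-- PA*01 expressions over an action set `Act`. -/
inductive PExpr (Act : Type) : Type
  | dl : PExpr Act
  | emp : PExpr Act
  | act : Act → PExpr Act
  | seq : PExpr Act → PExpr Act → PExpr Act
  | alt : PExpr Act → PExpr Act → PExpr Act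
  | star : PExpr Act → PExpr Act
  | par : PExpr Act → PExpr Act → PExpr Act

variable {Act : Type}

/-- The termination predicate `↓` of PA*01. -/
inductive PTerm : PExpr Act → Prop
  | emp : PTerm PExpr.emp
  | altl {p q : PExpr Act} : PTerm p → PTerm (PExpr.alt p q)
  | altr {p q : PExpr Act} : PTerm q → PTerm (PExpr.alt p q)
  | seq {p q : PExpr Act} : PTerm p → PTerm q → PTerm (PExpr.seq p q)
  | star {p : PExpr Act} : PTerm (PExpr.star p)
  | par {p q : PExpr Act} : PTerm p → PTerm q → PTerm (PExpr.par p q)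

/-- The transition relation `p →a p'` of PA*01 (pure interleaving). -/
inductive PStep : PExpr Act → Act → PExpr Act → Prop
  | act {a : Act} : PStep (PExpr.act a) a PExpr.emp
  | altl {p q p' : PExpr Act} {a : Act} : PStep p a p' → PStep (PExpr.alt p q) a p'
  | altr {p q q' : PExpr Act} {a : Act} : PStep q a q' → PStep (PExpr.alt p q) a q'
  | seql {p q p' : PExpr Act} {a : Act} :
      PStep p a p' → PStep (PExpr.seq p q) a (PExpr.seq p' q)
  | seqr {p q q' : PExpr Act} {a : Act} :
      PTerm p → PStep q a q' → PStep (PExpr.seq p q) a q'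
  | star {p p' : PExpr Act} {a : Act} :
      PStep p a p' → PStep (PExpr.star p) a (PExpr.seq p' (PExpr.star p))
  | parl {p q p' : PExpr Act} {a : Act} :
      PStep p a p' → PStep (PExpr.par p q) a (PExpr.par p' q)
  | parr {p q q' : PExpr Act} {a : Act} :
      PStep q a q' → PStep (PExpr.par p q) a (PExpr.par p q')

/-- `p → p'`: a transition with some label. -/
def PStepAny (p q : PExpr Act) : Prop := ∃ a, PStep p a q

/-- `p →* p'`: reachability. -/
def PReach (p q : PExpr Act) : Prop := Relation.ReflTransGen PStepAny p q

/-- `p` is normed: some terminating expression is reachable from `p`. -/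
def PNormed (p : PExpr Act) : Prop := ∃ q, PReach p q ∧ PTerm q

/-- A strongly connected component: a maximal set of mutually reachable states. -/
def IsSCC (C : Set (PExpr Act)) : Prop :=
  (∀ s ∈ C, ∀ t ∈ C, PReach s t) ∧
    ∀ D : Set (PExpr Act), C ⊆ D → (∀ s ∈ D, ∀ t ∈ D, PReach s t) → D = C

/-- A trivial SCC: a singleton `{s}` with no transition `s → s`. -/
def IsTrivialSCC (C : Set (PExpr Act)) : Prop := ∃ s, C = {s} ∧ ¬ PStepAny s s

/-- `C · q = { p · q | p ∈ C }`. -/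
def seqSet (C : Set (PExpr Act)) (q : PExpr Act) : Set (PExpr Act) :=
  (fun p => PExpr.seq p q) '' C

/-- `C₁ ‖ C₂ = { p ‖ q | p ∈ C₁, q ∈ C₂ }`. -/
def parSet (C₁ C₂ : Set (PExpr Act)) : Set (PExpr Act) :=
  Set.image2 PExpr.par C₁ C₂

/-- A basic SCC: `C = C' · q*` for some set `C'` that is not an SCC. -/
def IsBasic (C : Set (PExpr Act)) : Prop :=
  ∃ (C' : Set (PExpr Act)) (q : PExpr Act), C = seqSet C' (PExpr.star q) ∧ ¬ IsSCC C'

/-- The set `Extⁿ(s)` of normed exit transitions from `s`, w.r.t. the SCC `C`. -/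
def ExtN (C : Set (PExpr Act)) (s : PExpr Act) : Set (Act × PExpr Act) :=
  {e | PStep s e.1 e.2 ∧ e.2 ∉ C ∧ PNormed e.2}

/-- `s ∈ C` is an alive exit state if `s↓` or `s` has a normed exit transition. -/
def AliveExit (C : Set (PExpr Act)) (s : PExpr Act) : Prop :=
  s ∈ C ∧ (PTerm s ∨ ∃ e, e ∈ ExtN C s)

/-- `E · q = { (a, r · q) | (a, r) ∈ E }`. -/
def extSeq (E : Set (Act × PExpr Act)) (q : PExpr Act) : Set (Act × PExpr Act) :=
  (fun e => (e.1, PExpr.seq e.2 q)) '' E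

/-- `E ‖ q = { (a, r ‖ q) | (a, r) ∈ E }`. -/
def extParL (E : Set (Act × PExpr Act)) (q : PExpr Act) : Set (Act × PExpr Act) :=
  (fun e => (e.1, PExpr.par e.2 q)) '' E

/-- `p ‖ E = { (a, p ‖ r) | (a, r) ∈ E }`. -/
def extParR (p : PExpr Act) (E : Set (Act × PExpr Act)) : Set (Act × PExpr Act) :=
  (fun e => (e.1, PExpr.par p e.2)) '' E

/-- `s` and `s'` belong to the same strongly connected component. -/
def SameSCC (s s' : PExpr Act) : Prop := ∃ C : Set (PExpr Act), IsSCC C ∧ s ∈ C ∧ s' ∈ C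

/-- The equivalence `∼` on exit transitions: same action, targets in the same SCC. -/
def ExitEquiv (e e' : Act × PExpr Act) : Prop := e.1 = e'.1 ∧ SameSCC e.2 e'.2

/-- Is the expression a star expression? -/
def isStarP : PExpr Act → Bool
  | PExpr.star _ => true
  | _ => false

/-- The measure `OC` on PA*01 expressions. -/
def OC : PExpr Act → ℕ
  | PExpr.dl => 0
  | PExpr.emp => 0
  | PExpr.act _ => 1
  | PExpr.seq _ q => if isStarP q then 0 else OC q + 1
  | PExpr.alt p q => max (OC p) (OC q) + 1
  | PExpr.star _ => 1
  | PExpr.par _ _ => 0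

/-- A PA*01 expression without occurrences of `‖` is a BPA*01 expression. -/
def NoPar : PExpr Act → Prop
  | PExpr.dl => True
  | PExpr.emp => True
  | PExpr.act _ => True
  | PExpr.seq p q => NoPar p ∧ NoPar q
  | PExpr.alt p q => NoPar p ∧ NoPar q
  | PExpr.star p => NoPar p
  | PExpr.par _ _ => False

/-- Bisimulations on PA*01 expressions. -/
def IsBisimulation (R : PExpr Act → PExpr Act → Prop) : Prop :=
  ∀ p q, R p q →
    (∀ a p', PStep p a p' → ∃ q', PStep q a q' ∧ R p' q') ∧
    (∀ a q', PStep q a q' → ∃ p', PStep p a p' ∧ R p' q') ∧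
    (PTerm p ↔ PTerm q)

/-- Bisimilarity of PA*01 expressions. -/
def Bisimilar (p q : PExpr Act) : Prop :=
  ∃ R : PExpr Act → PExpr Act → Prop, IsBisimulation R ∧ R p q

/-!
An SCC is exactly the mutual-reachability class of any of its members. A transition of `p ‖ q`
moves exactly one component, so everything reachable from `p ‖ q` has the form `p' ‖ q'`, and
`p ‖ q →* p' ‖ q'` iff `p →* p'` and `q →* q'`. Hence the class of `p ‖ q` is the product of the
classes of `p` and `q`, and `p ‖ q` has a self-loop iff `p` or `q` has one. Since `‖` is injective,
a product `C₁ ‖ C₂` of nonempty sets determines its factors.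
-/

def sccOf (s : PExpr Act) : Set (PExpr Act) := {t | PReach s t ∧ PReach t s}

lemma mem_sccOf_self (s : PExpr Act) : s ∈ sccOf s := ⟨.refl, .refl⟩

lemma reach_of_mem_sccOf {s t u : PExpr Act} (ht : t ∈ sccOf s) (hu : u ∈ sccOf s) :
    PReach t u :=
  ht.2.trans hu.1

lemma isSCC_iff {C : Set (PExpr Act)} : IsSCC C ↔ ∃ s, C = sccOf s := by
  constructor
  · intro h
    obtain ⟨s, hs⟩ : C.Nonempty := Set.nonempty_iff_ne_empty.2 fun hC => by
      subst hC
      exact Set.singleton_ne_empty PExpr.dl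
        (h.2 _ (Set.empty_subset _) (by rintro s rfl t rfl; exact .refl))
    refine ⟨s, (h.2 (sccOf s) (fun t ht => ⟨h.1 s hs t ht, h.1 t ht s hs⟩) ?_).symm⟩
    exact fun t ht u hu => reach_of_mem_sccOf ht hu
  · rintro ⟨s, rfl⟩
    refine ⟨fun t ht u hu => reach_of_mem_sccOf ht hu, fun D hsD hD => ?_⟩
    have hs : s ∈ D := hsD (mem_sccOf_self s)
    exact hsD.antisymm' fun t ht => ⟨hD s hs t ht, hD t ht s hs⟩

lemma PStep.par_inv {p q t : PExpr Act} {a : Act} (h : PStep (PExpr.par p q) a t) :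
    (∃ p', PStep p a p' ∧ t = PExpr.par p' q) ∨ (∃ q', PStep q a q' ∧ t = PExpr.par p q') := by
  cases h with
  | parl h => exact .inl ⟨_, h, rfl⟩
  | parr h => exact .inr ⟨_, h, rfl⟩

lemma pStepAny_par_self_iff {p q : PExpr Act} :
    PStepAny (PExpr.par p q) (PExpr.par p q) ↔ PStepAny p p ∨ PStepAny q q := by
  constructor
  · rintro ⟨a, h⟩
    rcases h.par_inv with ⟨p', hp, he⟩ | ⟨q', hq, he⟩
    · exact .inl ⟨a, (PExpr.par.inj he).1 ▸ hp⟩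
    · exact .inr ⟨a, (PExpr.par.inj he).2 ▸ hq⟩
  · rintro (⟨a, h⟩ | ⟨a, h⟩)
    exacts [⟨a, .parl h⟩, ⟨a, .parr h⟩]

lemma PReach.par_inv {p q t : PExpr Act} (h : PReach (PExpr.par p q) t) :
    ∃ p' q', t = PExpr.par p' q' ∧ PReach p p' ∧ PReach q q' := by
  induction h with
  | refl => exact ⟨p, q, rfl, .refl, .refl⟩
  | tail _ hstep ih =>
    obtain ⟨p', q', rfl, hp, hq⟩ := ih
    obtain ⟨a, hstep⟩ := hstep
    rcases hstep.par_inv with ⟨p'', h, rfl⟩ | ⟨q'', h, rfl⟩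
    · exact ⟨p'', q', rfl, hp.tail ⟨a, h⟩, hq⟩
    · exact ⟨p', q'', rfl, hp, hq.tail ⟨a, h⟩⟩

lemma PReach.par_left {p p' : PExpr Act} (q : PExpr Act) (h : PReach p p') :
    PReach (PExpr.par p q) (PExpr.par p' q) := by
  induction h with
  | refl => exact .refl
  | tail _ hstep ih => obtain ⟨a, hstep⟩ := hstep; exact ih.tail ⟨a, .parl hstep⟩

lemma PReach.par_right (p : PExpr Act) {q q' : PExpr Act} (h : PReach q q') :
    PReach (PExpr.par p q) (PExpr.par p q') := by
  induction h with
  | refl => exact .refl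
  | tail _ hstep ih => obtain ⟨a, hstep⟩ := hstep; exact ih.tail ⟨a, .parr hstep⟩

lemma PReach.par_iff {p q p' q' : PExpr Act} :
    PReach (PExpr.par p q) (PExpr.par p' q') ↔ PReach p p' ∧ PReach q q' := by
  constructor
  · intro h
    obtain ⟨p'', q'', he, hp, hq⟩ := h.par_inv
    obtain ⟨rfl, rfl⟩ := PExpr.par.inj he
    exact ⟨hp, hq⟩
  · rintro ⟨hp, hq⟩
    exact (hp.par_left q).trans (hq.par_right p')

lemma sccOf_par (p q : PExpr Act) :
    sccOf (PExpr.par p q) = parSet (sccOf p) (sccOf q) := by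
  ext t
  constructor
  · rintro ⟨h₁, h₂⟩
    obtain ⟨p', q', rfl, -, -⟩ := h₁.par_inv
    rw [PReach.par_iff] at h₁ h₂
    exact Set.mem_image2_of_mem ⟨h₁.1, h₂.1⟩ ⟨h₁.2, h₂.2⟩
  · rintro ⟨p', ⟨hp₁, hp₂⟩, q', ⟨hq₁, hq₂⟩, rfl⟩
    exact ⟨PReach.par_iff.2 ⟨hp₁, hq₁⟩, PReach.par_iff.2 ⟨hp₂, hq₂⟩⟩

lemma parSet_inj {C₁ C₂ D₁ D₂ : Set (PExpr Act)} (h₁ : C₁.Nonempty) (h₂ : C₂.Nonempty) :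
    parSet C₁ C₂ = parSet D₁ D₂ ↔ C₁ = D₁ ∧ C₂ = D₂ := by
  have hpar : Function.Injective2 (@PExpr.par Act) := fun _ _ _ _ h => PExpr.par.inj h
  simp only [parSet, ← Set.image_uncurry_prod]
  rw [hpar.uncurry.image_injective.eq_iff, Set.prod_eq_prod_iff_of_nonempty (h₁.prod h₂)]

lemma isSCC_parSet_iff {C₁ C₂ : Set (PExpr Act)} :
    IsSCC (parSet C₁ C₂) ↔ IsSCC C₁ ∧ IsSCC C₂ := by
  simp only [isSCC_iff]
  constructor
  · rintro ⟨s, hs⟩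
    obtain ⟨p, hp, q, hq, rfl⟩ : s ∈ parSet C₁ C₂ := hs ▸ mem_sccOf_self s
    rw [sccOf_par, parSet_inj ⟨p, hp⟩ ⟨q, hq⟩] at hs
    exact ⟨⟨p, hs.1⟩, ⟨q, hs.2⟩⟩
  · rintro ⟨⟨p, rfl⟩, ⟨q, rfl⟩⟩
    exact ⟨PExpr.par p q, (sccOf_par p q).symm⟩

lemma isTrivialSCC_parSet_iff {C₁ C₂ : Set (PExpr Act)} :
    IsTrivialSCC (parSet C₁ C₂) ↔ IsTrivialSCC C₁ ∧ IsTrivialSCC C₂ := by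
  constructor
  · rintro ⟨s, hs, hloop⟩
    obtain ⟨p, hp, q, hq, rfl⟩ : s ∈ parSet C₁ C₂ := hs ▸ rfl
    rw [pStepAny_par_self_iff, not_or] at hloop
    rw [show {PExpr.par p q} = parSet {p} {q} from Set.image2_singleton.symm,
      parSet_inj ⟨p, hp⟩ ⟨q, hq⟩] at hs
    exact ⟨⟨p, hs.1, hloop.1⟩, ⟨q, hs.2, hloop.2⟩⟩
  · rintro ⟨⟨p, rfl, hp⟩, ⟨q, rfl, hq⟩⟩
    refine ⟨PExpr.par p q, Set.image2_singleton, ?_⟩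
    rw [pStepAny_par_self_iff]
    exact not_or.2 ⟨hp, hq⟩

theorem par_scc_general {Act : Type} (C₁ C₂ : Set (PExpr Act)) :
    (IsSCC (parSet C₁ C₂) ↔ IsSCC C₁ ∧ IsSCC C₂) ∧
    (IsSCC C₁ → IsSCC C₂ →
      (¬ IsTrivialSCC (parSet C₁ C₂) ↔ ¬ IsTrivialSCC C₁ ∨ ¬ IsTrivialSCC C₂)) :=
  ⟨isSCC_parSet_iff, fun _ _ => by rw [isTrivialSCC_parSet_iff, not_and_or]⟩

/-- `C₁ ‖ C₂` is an SCC iff both `C₁` and `C₂` are SCCs; moreover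
(for SCCs `C₁` and `C₂`), `C₁ ‖ C₂` is non-trivial iff at least one of `C₁`
and `C₂` is non-trivial. -/
theorem par_scc {Act : Type} [Nonempty Act] (C₁ C₂ : Set (PExpr Act)) :
    (IsSCC (parSet C₁ C₂) ↔ IsSCC C₁ ∧ IsSCC C₂) ∧
    (IsSCC C₁ → IsSCC C₂ →
      (¬ IsTrivialSCC (parSet C₁ C₂) ↔ ¬ IsTrivialSCC C₁ ∨ ¬ IsTrivialSCC C₂)) :=
  par_scc_general C₁ C₂
end

section
/- Let C₁ and C₂ be strongly connected components in PA*01, both with alive exit states. Then C₁‖C₂ is a strongly connected component with alive exit states too, and for all p ∈ C₁ and q ∈ C₂, Extⁿ(p‖q) = (Extⁿ(p)‖q) ∪ (p‖Extⁿ(q)), where Extⁿ(p‖q) is computed with respect to the SCC C₁‖C₂, Extⁿ(p) with respect to C₁, Extⁿ(q) with respect to C₂, E‖q = {(a,r‖q) | (a,r) ∈ E}, and p‖E = {(a,p‖r) | (a,r) ∈ E}. -/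
variable {Act : Type}

/-!
Interleaving makes the components of `p ‖ q` move independently: `p ‖ q →* d` holds exactly
when `d = p' ‖ q'` with `p →* p'` and `q →* q'`, and `p ‖ q` is normed iff both `p` and `q` are.
Hence mutual reachability in `C₁ ‖ C₂` is componentwise, which gives both the SCC property and
the splitting of a normed exit of `p ‖ q` into a normed exit of one side (the other side staying
in its SCC, and being normed because it reaches an alive exit state).
-/

namespace PReach

variable {p p' q q' : PExpr Act}

theorem par_left_s16 (h : PReach p p') : PReach (PExpr.par p q) (PExpr.par p' q) :=
  Relation.ReflTransGen.lift (fun r => PExpr.par r q)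
    (fun _ _ ⟨a, hs⟩ => ⟨a, PStep.parl hs⟩) _ _ h

theorem par_right_s16 (h : PReach q q') : PReach (PExpr.par p q) (PExpr.par p q') :=
  Relation.ReflTransGen.lift (PExpr.par p)
    (fun _ _ ⟨a, hs⟩ => ⟨a, PStep.parr hs⟩) _ _ h

theorem par (hp : PReach p p') (hq : PReach q q') :
    PReach (PExpr.par p q) (PExpr.par p' q') :=
  hp.par_left_s16.trans hq.par_right_s16

theorem exists_of_par {d : PExpr Act} (h : PReach (PExpr.par p q) d) :
    ∃ p' q', d = PExpr.par p' q' ∧ PReach p p' ∧ PReach q q' := by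
  induction h with
  | refl => exact ⟨p, q, rfl, .refl, .refl⟩
  | tail _ hstep ih =>
    obtain ⟨p', q', rfl, hp, hq⟩ := ih
    obtain ⟨a, hstep⟩ := hstep
    cases hstep with
    | parl hs => exact ⟨_, q', rfl, hp.tail ⟨a, hs⟩, hq⟩
    | parr hs => exact ⟨p', _, rfl, hp, hq.tail ⟨a, hs⟩⟩

theorem of_par_par (h : PReach (PExpr.par p q) (PExpr.par p' q')) :
    PReach p p' ∧ PReach q q' := by
  obtain ⟨p'', q'', heq, hp, hq⟩ := h.exists_of_par
  obtain ⟨rfl, rfl⟩ := PExpr.par.inj heq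
  exact ⟨hp, hq⟩

end PReach

theorem PNormed.of_reach {p q : PExpr Act} (h : PReach p q) (hq : PNormed q) : PNormed p :=
  let ⟨t, hqt, ht⟩ := hq
  ⟨t, h.trans hqt, ht⟩

theorem pNormed_par_iff {p q : PExpr Act} :
    PNormed (PExpr.par p q) ↔ PNormed p ∧ PNormed q := by
  constructor
  · rintro ⟨t, hr, ht⟩
    obtain ⟨p', q', rfl, hp, hq⟩ := hr.exists_of_par
    cases ht with
    | par htp htq => exact ⟨⟨p', hp, htp⟩, ⟨q', hq, htq⟩⟩
  · rintro ⟨⟨p', hp, htp⟩, ⟨q', hq, htq⟩⟩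
    exact ⟨PExpr.par p' q', hp.par hq, PTerm.par htp htq⟩

theorem par_mem_parSet_iff {C₁ C₂ : Set (PExpr Act)} {p q : PExpr Act} :
    PExpr.par p q ∈ parSet C₁ C₂ ↔ p ∈ C₁ ∧ q ∈ C₂ :=
  Set.mem_image2_iff fun _ _ _ _ h => PExpr.par.inj h

namespace IsSCC

variable {C C₁ C₂ : Set (PExpr Act)}

theorem nonempty (h : IsSCC C) : C.Nonempty := by
  rw [Set.nonempty_iff_ne_empty]
  rintro rfl
  refine Set.singleton_ne_empty (PExpr.emp : PExpr Act) (h.2 _ (Set.empty_subset _) ?_)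
  rintro _ rfl _ rfl
  exact .refl

theorem mem_of_reach_of_reach (h : IsSCC C) {x y : PExpr Act} (hx : x ∈ C)
    (hxy : PReach x y) (hyx : PReach y x) : y ∈ C := by
  have hvia : ∀ s ∈ insert y C, PReach s x ∧ PReach x s := by
    rintro s (rfl | hs)
    · exact ⟨hyx, hxy⟩
    · exact ⟨h.1 s hs x hx, h.1 x hx s hs⟩
  have hD := h.2 (insert y C) (Set.subset_insert y C)
    fun s hs t ht => (hvia s hs).1.trans (hvia t ht).2
  exact hD ▸ Set.mem_insert y C

theorem parSet (h₁ : IsSCC C₁) (h₂ : IsSCC C₂) : IsSCC (parSet C₁ C₂) := by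
  refine ⟨?_, fun D hsub hD => (Set.Subset.antisymm (fun d hd => ?_) hsub)⟩
  · rintro _ ⟨x, hx, y, hy, rfl⟩ _ ⟨x', hx', y', hy', rfl⟩
    exact (h₁.1 x hx x' hx').par (h₂.1 y hy y' hy')
  · obtain ⟨s₁, hs₁⟩ := h₁.nonempty
    obtain ⟨s₂, hs₂⟩ := h₂.nonempty
    have hs : PExpr.par s₁ s₂ ∈ D := hsub (par_mem_parSet_iff.2 ⟨hs₁, hs₂⟩)
    obtain ⟨p, q, rfl, hp, hq⟩ := (hD _ hs _ hd).exists_of_par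
    obtain ⟨hp', hq'⟩ := (hD _ hd _ hs).of_par_par
    exact par_mem_parSet_iff.2
      ⟨h₁.mem_of_reach_of_reach hs₁ hp hp', h₂.mem_of_reach_of_reach hs₂ hq hq'⟩

theorem pNormed_of_aliveExit (h : IsSCC C) {s q : PExpr Act} (hs : AliveExit C s)
    (hq : q ∈ C) : PNormed q := by
  refine PNormed.of_reach (h.1 q hq s hs.1) ?_
  rcases hs.2 with ht | ⟨⟨a, r⟩, hstep, -, hr⟩
  · exact ⟨s, .refl, ht⟩
  · exact hr.of_reach (.single ⟨a, hstep⟩)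

end IsSCC

section Par

variable {C₁ C₂ : Set (PExpr Act)}

theorem extN_par {p q : PExpr Act} (hp : p ∈ C₁) (hq : q ∈ C₂) (hpn : PNormed p)
    (hqn : PNormed q) :
    ExtN (parSet C₁ C₂) (PExpr.par p q) = extParL (ExtN C₁ p) q ∪ extParR p (ExtN C₂ q) := by
  ext ⟨a, r⟩
  constructor
  · rintro ⟨hstep, hr, hrn⟩
    cases hstep with
    | @parl _ _ p' _ hs =>
      exact Or.inl ⟨(a, p'), ⟨hs, fun h => hr (par_mem_parSet_iff.2 ⟨h, hq⟩),
        (pNormed_par_iff.1 hrn).1⟩, rfl⟩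
    | @parr _ _ q' _ hs =>
      exact Or.inr ⟨(a, q'), ⟨hs, fun h => hr (par_mem_parSet_iff.2 ⟨hp, h⟩),
        (pNormed_par_iff.1 hrn).2⟩, rfl⟩
  · rintro (⟨⟨_, p'⟩, ⟨hs, hp', hpn'⟩, ⟨⟩⟩ | ⟨⟨_, q'⟩, ⟨hs, hq', hqn'⟩, ⟨⟩⟩)
    · exact ⟨PStep.parl hs, fun h => hp' (par_mem_parSet_iff.1 h).1,
        pNormed_par_iff.2 ⟨hpn', hqn⟩⟩
    · exact ⟨PStep.parr hs, fun h => hq' (par_mem_parSet_iff.1 h).2,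
        pNormed_par_iff.2 ⟨hpn, hqn'⟩⟩

theorem AliveExit.par (h₁ : IsSCC C₁) (h₂ : IsSCC C₂) {s₁ s₂ : PExpr Act}
    (hs₁ : AliveExit C₁ s₁) (hs₂ : AliveExit C₂ s₂) :
    AliveExit (parSet C₁ C₂) (PExpr.par s₁ s₂) := by
  refine ⟨par_mem_parSet_iff.2 ⟨hs₁.1, hs₂.1⟩, ?_⟩
  have hExt := extN_par (C₁ := C₁) (C₂ := C₂) hs₁.1 hs₂.1
    (h₁.pNormed_of_aliveExit hs₁ hs₁.1) (h₂.pNormed_of_aliveExit hs₂ hs₂.1)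
  rcases hs₁.2 with ht₁ | ⟨e, he⟩
  · rcases hs₂.2 with ht₂ | ⟨e, he⟩
    · exact Or.inl (PTerm.par ht₁ ht₂)
    · exact Or.inr ⟨_, by rw [hExt]; exact Or.inr (Set.mem_image_of_mem _ he)⟩
  · exact Or.inr ⟨_, by rw [hExt]; exact Or.inl (Set.mem_image_of_mem _ he)⟩

end Par

theorem par_extn_general {Act : Type} {C₁ C₂ : Set (PExpr Act)}
    (h₁ : IsSCC C₁) (h₂ : IsSCC C₂)
    (ha₁ : ∃ s, AliveExit C₁ s) (ha₂ : ∃ s, AliveExit C₂ s) :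
    IsSCC (parSet C₁ C₂) ∧ (∃ s, AliveExit (parSet C₁ C₂) s) ∧
      ∀ p ∈ C₁, ∀ q ∈ C₂,
        ExtN (parSet C₁ C₂) (PExpr.par p q) =
          extParL (ExtN C₁ p) q ∪ extParR p (ExtN C₂ q) := by
  obtain ⟨s₁, hs₁⟩ := ha₁
  obtain ⟨s₂, hs₂⟩ := ha₂
  refine ⟨h₁.parSet h₂, ⟨_, AliveExit.par h₁ h₂ hs₁ hs₂⟩, fun p hp q hq => ?_⟩
  exact extN_par hp hq (h₁.pNormed_of_aliveExit hs₁ hp) (h₂.pNormed_of_aliveExit hs₂ hq)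

/-- If `C₁` and `C₂` are SCCs in PA*01, both with alive exit
states, then `C₁ ‖ C₂` is an SCC with alive exit states, and for all `p ∈ C₁`
and `q ∈ C₂`: `Extⁿ(p ‖ q) = (Extⁿ(p) ‖ q) ∪ (p ‖ Extⁿ(q))`. -/
theorem par_extn {Act : Type} [Nonempty Act] {C₁ C₂ : Set (PExpr Act)}
    (h₁ : IsSCC C₁) (h₂ : IsSCC C₂)
    (ha₁ : ∃ s, AliveExit C₁ s) (ha₂ : ∃ s, AliveExit C₂ s) :
    IsSCC (parSet C₁ C₂) ∧ (∃ s, AliveExit (parSet C₁ C₂) s) ∧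
      ∀ p ∈ C₁, ∀ q ∈ C₂,
        ExtN (parSet C₁ C₂) (PExpr.par p q) =
          extParL (ExtN C₁ p) q ∪ extParR p (ExtN C₂ q) :=
  par_extn_general h₁ h₂ ha₁ ha₂
end
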